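/- Let G : [0,T] × Σ_d → ℝ^d be the vector field Gᵢ(t,x) = Σⱼ xⱼ qⱼᵢ(t,x) with q as above (off-diagonal entries in [0,Q], rows summing to zero, Lipschitz in x). Then the initial value problem dX(t)/dt = G(t, X(t)), X(0) = x₀ ∈ Σ_d, has a unique solution on [0,T], and this solution remains in the simplex Σ_d for all t ∈ [0,T]. -/

import Mathlib

/-!
Truncating the field by the coordinatewise projection onto the unit cube gives a bounded, globally
Lipschitz field, so Picard–Lindelöf yields a solution on `[0, T]`. Its mass `∑ i, X i` is conserved
because the rows of `q` sum to zero, and no coordinate can become negative: a negative coordinate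
is truncated to `0`, leaving only the nonnegative inflow `∑_{j ≠ i} xⱼ qⱼᵢ`. So the solution stays
in the simplex, where the truncation is the identity, and hence solves the original equation.
Uniqueness holds because the field is Lipschitz on bounded sets and any solution is bounded on
the compact interval `[0, T]`.
-/

open Set Metric Finset
open scoped NNReal

theorem nonneg_of_deriv_right_nonneg_of_neg {f f' : ℝ → ℝ} {a b : ℝ}
    (hf : ContinuousOn f (Icc a b)) (hf' : ∀ x ∈ Ico a b, HasDerivWithinAt f (f' x) (Ici x) x)
    (ha : 0 ≤ f a) (hneg : ∀ x ∈ Ico a b, f x < 0 → 0 ≤ f' x) :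
    ∀ ⦃x⦄, x ∈ Icc a b → 0 ≤ f x := by
  intro x hx
  -- `-f` stays below every line `ε (1 + (t - a))`: on touching, `f < 0`, so `-f' ≤ 0 < ε`.
  have hline : ∀ ε > 0, -f x ≤ ε * (1 + (x - a)) := fun ε hε =>
    image_le_of_deriv_right_lt_deriv_boundary (f := fun t => -f t) (f' := fun t => -f' t)
      (B := fun t => ε * (1 + (t - a))) (B' := fun _ => ε) hf.neg (fun t ht => (hf' t ht).neg)
      (by simp only [sub_self, add_zero, mul_one]; linarith)
      (fun t => by simpa using (((hasDerivAt_id t).sub_const a).const_add 1).const_mul ε)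
      (fun t ht heq => by
        have := hneg t ht (by nlinarith [ht.1])
        linarith) hx
  by_contra! hfx
  have hpos : 0 < 1 + (x - a) := by linarith [hx.1]
  have := hline (-f x / (2 * (1 + (x - a)))) (div_pos (by linarith) (by linarith))
  rw [div_mul_eq_mul_div, mul_div_mul_right _ _ hpos.ne'] at this
  linarith

theorem mem_stdSimplex_of_hasDerivWithinAt {ι : Type*} [Fintype ι] {F : ℝ → (ι → ℝ) → ι → ℝ}
    {X : ℝ → ι → ℝ} {a b : ℝ}
    (hX : ∀ t ∈ Icc a b, HasDerivWithinAt X (F t (X t)) (Icc a b) t)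
    (hsum : ∀ t x, ∑ i, F t x i = 0) (hneg : ∀ t x i, x i < 0 → 0 ≤ F t x i)
    (ha : X a ∈ stdSimplex ℝ ι) : ∀ t ∈ Icc a b, X t ∈ stdSimplex ℝ ι := by
  have hXc : ContinuousOn X (Icc a b) := fun t ht => (hX t ht).continuousWithinAt
  have hX' (i : ι) (t : ℝ) (ht : t ∈ Ico a b) :
      HasDerivWithinAt (X · i) (F t (X t) i) (Ici t) t :=
    hasDerivWithinAt_pi.1
      ((hX t (Ico_subset_Icc_self ht)).mono_of_mem_nhdsWithin (Icc_mem_nhdsGE_of_mem ht)) i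
  have hnonneg (i : ι) : ∀ t ∈ Icc a b, 0 ≤ X t i :=
    nonneg_of_deriv_right_nonneg_of_neg ((continuous_apply i).comp_continuousOn hXc)
      (hX' i) (ha.1 i) fun t _ hi => hneg t _ i hi
  have hmass : ∀ t ∈ Icc a b, ∑ i, X t i = ∑ i, X a i :=
    constant_of_has_deriv_right_zero
      (continuousOn_finsetSum _ fun i _ => (continuous_apply i).comp_continuousOn hXc)
      fun t ht => by
        simpa only [hsum] using HasDerivWithinAt.fun_sum (u := univ) fun i _ => hX' i t ht
  exact fun t ht => ⟨fun i => hnonneg i t ht, (hmass t ht).trans ha.2⟩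

theorem exists_forall_mem_Icc_hasDerivWithinAt_of_lipschitzWith {E : Type*}
    [NormedAddCommGroup E] [NormedSpace ℝ E] [CompleteSpace E] {v : ℝ → E → E} {a b : ℝ}
    {K L : ℝ≥0} (hab : a ≤ b) (x₀ : E) (hlip : ∀ t ∈ Icc a b, LipschitzWith K (v t))
    (hcont : ∀ x, ContinuousOn (v · x) (Icc a b)) (hbound : ∀ t ∈ Icc a b, ∀ x, ‖v t x‖ ≤ L) :
    ∃ X : ℝ → E, X a = x₀ ∧ ∀ t ∈ Icc a b, HasDerivWithinAt X (v t (X t)) (Icc a b) t :=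
  IsPicardLindelof.exists_eq_forall_mem_Icc_hasDerivWithinAt₀ (t₀ := ⟨a, left_mem_Icc.2 hab⟩)
    (a := L * Real.toNNReal (b - a)) (K := K)
    { lipschitzOnWith := fun t ht => (hlip t ht).lipschitzOnWith
      continuousOn := fun x _ => hcont x
      norm_le := fun t ht x _ => hbound t ht x
      mul_max_le := by simp [hab] }

theorem eqOn_Icc_of_hasDerivWithinAt_of_lipschitzOnWith_closedBall {E : Type*}
    [NormedAddCommGroup E] [NormedSpace ℝ E] {v : ℝ → E → E} {f g : ℝ → E} {a b : ℝ}
    (hv : ∀ R : ℝ≥0, ∃ K, ∀ t ∈ Ico a b, LipschitzOnWith K (v t) (closedBall 0 R))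
    (hf : ∀ t ∈ Icc a b, HasDerivWithinAt f (v t (f t)) (Icc a b) t)
    (hg : ∀ t ∈ Icc a b, HasDerivWithinAt g (v t (g t)) (Icc a b) t)
    (ha : f a = g a) : EqOn f g (Icc a b) := by
  have hfc : ContinuousOn f (Icc a b) := fun t ht => (hf t ht).continuousWithinAt
  have hgc : ContinuousOn g (Icc a b) := fun t ht => (hg t ht).continuousWithinAt
  obtain ⟨Cf, hCf⟩ := isCompact_Icc.exists_bound_of_continuousOn hfc
  obtain ⟨Cg, hCg⟩ := isCompact_Icc.exists_bound_of_continuousOn hgc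
  set R := Real.toNNReal (max Cf Cg)
  obtain ⟨K, hK⟩ := hv R
  have hfR : ∀ t ∈ Ico a b, f t ∈ closedBall 0 R := fun t ht => mem_closedBall_zero_iff.2 <|
    (hCf t (Ico_subset_Icc_self ht)).trans ((le_max_left _ _).trans (Real.le_coe_toNNReal _))
  have hgR : ∀ t ∈ Ico a b, g t ∈ closedBall 0 R := fun t ht => mem_closedBall_zero_iff.2 <|
    (hCg t (Ico_subset_Icc_self ht)).trans ((le_max_right _ _).trans (Real.le_coe_toNNReal _))
  exact ODE_solution_unique_of_mem_Icc_right hK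
    hfc (fun t ht => (hf t (Ico_subset_Icc_self ht)).mono_of_mem_nhdsWithin
      (Icc_mem_nhdsGE_of_mem ht)) hfR
    hgc (fun t ht => (hg t (Ico_subset_Icc_self ht)).mono_of_mem_nhdsWithin
      (Icc_mem_nhdsGE_of_mem ht)) hgR ha

section KineticField

variable {ι : Type*} [Fintype ι]

theorem abs_le_card_mul_of_sum_eq_zero {r : ι → ℝ} {i : ι} {Q : ℝ} (hQ : 0 ≤ Q)
    (hoff : ∀ k, i ≠ k → r k ∈ Icc 0 Q) (hsum : ∑ k, r k = 0) (k : ι) :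
    |r k| ≤ Fintype.card ι * Q := by
  classical
  rcases eq_or_ne i k with rfl | hik
  · have hdiag : r i = -∑ k ∈ univ.erase i, r k := by
      rw [eq_neg_iff_add_eq_zero, add_sum_erase _ _ (mem_univ i), hsum]
    have hcard : ((univ.erase i).card : ℝ) ≤ Fintype.card ι := by
      exact_mod_cast card_erase_le
    rw [hdiag, abs_neg, abs_of_nonneg (sum_nonneg fun k hk => (hoff k (ne_of_mem_erase hk).symm).1)]
    calc ∑ k ∈ univ.erase i, r k ≤ (univ.erase i).card * Q := by
          rw [← nsmul_eq_mul]
          exact sum_le_card_nsmul _ _ Q fun k hk => (hoff k (ne_of_mem_erase hk).symm).2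
      _ ≤ Fintype.card ι * Q := by gcongr
  · have hone : (1 : ℝ) ≤ Fintype.card ι := by exact_mod_cast Fintype.card_pos_iff.2 ⟨i⟩
    rw [abs_of_nonneg (hoff k hik).1]
    nlinarith [(hoff k hik).2]

noncomputable def kineticField (q : (ι → ℝ) → ι → ι → ℝ) (x : ι → ℝ) : ι → ℝ :=
  fun i => ∑ j, x j * q x j i

variable {q : (ι → ℝ) → ι → ι → ℝ} {x : ι → ℝ}

theorem sum_kineticField (hrow : ∀ j, ∑ i, q x j i = 0) : ∑ i, kineticField q x i = 0 := by
  simp only [kineticField]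
  rw [sum_comm]
  simp [← mul_sum, hrow]

theorem kineticField_nonneg {i : ι} (hx : 0 ≤ x) (hxi : x i = 0)
    (hoff : ∀ j, j ≠ i → 0 ≤ q x j i) : 0 ≤ kineticField q x i :=
  sum_nonneg fun j _ => by
    rcases eq_or_ne j i with rfl | hji
    · simp [hxi]
    · exact mul_nonneg (hx j) (hoff j hji)

theorem continuous_kineticField_apply {α : Type*} [TopologicalSpace α]
    {q : α → (ι → ℝ) → ι → ι → ℝ} (hq : ∀ j i, Continuous fun t => q t x j i) :
    Continuous fun t => kineticField (q t) x :=
  continuous_pi fun i => continuous_finsetSum _ fun j _ => continuous_const.mul (hq j i)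

theorem norm_kineticField_le {B R : ℝ≥0} (hB : ∀ x j i, |q x j i| ≤ B) (hx : ‖x‖ ≤ R) :
    ‖kineticField q x‖ ≤ ↑(Fintype.card ι * (R * B)) := by
  refine (pi_norm_le_iff_of_nonneg (by positivity)).2 fun i => ?_
  calc ‖kineticField q x i‖ ≤ ∑ j, |x j * q x j i| := abs_sum_le_sum_abs _ _
    _ ≤ ∑ _j : ι, (R * B : ℝ) := sum_le_sum fun j _ => by
        rw [abs_mul]
        exact mul_le_mul ((norm_le_pi_norm x j).trans hx) (hB x j i) (abs_nonneg _) R.2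
    _ = ↑(Fintype.card ι * (R * B)) := by simp

theorem lipschitzOnWith_kineticField {B R c : ℝ≥0} (hB : ∀ x j i, |q x j i| ≤ B)
    (hq : ∀ j i, LipschitzWith c fun x => q x j i) :
    LipschitzOnWith (Fintype.card ι * (B + R * c)) (kineticField q) (closedBall 0 R) := by
  refine LipschitzOnWith.of_dist_le_mul fun x _ y hy => ?_
  have hterm (j i : ι) :
      |x j * q x j i - y j * q y j i| ≤ (B + R * c) * dist x y := by
    have hxy : |x j - y j| ≤ dist x y := by
      simpa [Real.dist_eq] using dist_le_pi_dist x y j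
    have hyj : |y j| ≤ R := (norm_le_pi_norm y j).trans (mem_closedBall_zero_iff.1 hy)
    have hqxy : |q x j i - q y j i| ≤ c * dist x y := by
      simpa [Real.dist_eq] using (hq j i).dist_le_mul x y
    calc |x j * q x j i - y j * q y j i|
        = |(x j - y j) * q x j i + y j * (q x j i - q y j i)| := by ring_nf
      _ ≤ |x j - y j| * |q x j i| + |y j| * |q x j i - q y j i| := by
        rw [← abs_mul, ← abs_mul]; exact abs_add_le _ _
      _ ≤ dist x y * B + R * (c * dist x y) := by gcongr; exact hB x j i
      _ = (B + R * c) * dist x y := by ring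
  refine (dist_pi_le_iff (by positivity)).2 fun i => ?_
  calc dist (kineticField q x i) (kineticField q y i)
      ≤ ∑ j, |x j * q x j i - y j * q y j i| := by
        rw [Real.dist_eq, kineticField, kineticField, ← sum_sub_distrib]
        exact abs_sum_le_sum_abs _ _
    _ ≤ ∑ _j : ι, (B + R * c) * dist x y := sum_le_sum fun j _ => hterm j i
    _ = _ := by simp [mul_assoc]

end KineticField

section UnitCube

variable {ι : Type*}

noncomputable def projUnitCube (x : ι → ℝ) : ι → ℝ :=
  fun j => projIcc 0 1 zero_le_one (x j)

theorem projUnitCube_nonneg (x : ι → ℝ) : 0 ≤ projUnitCube x :=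
  fun j => (projIcc 0 1 zero_le_one (x j)).2.1

theorem projUnitCube_apply_of_nonpos {x : ι → ℝ} {j : ι} (h : x j ≤ 0) :
    projUnitCube x j = 0 := by
  simp [projUnitCube, projIcc_of_le_left _ h]

theorem projUnitCube_of_mem_stdSimplex [Fintype ι] {x : ι → ℝ} (hx : x ∈ stdSimplex ℝ ι) :
    projUnitCube x = x :=
  funext fun j => by simp [projUnitCube, projIcc_of_mem _ (mem_Icc_of_mem_stdSimplex hx j)]

theorem projUnitCube_mem_closedBall [Fintype ι] (x : ι → ℝ) : projUnitCube x ∈ closedBall 0 1 := by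
  refine mem_closedBall_zero_iff.2 <| (pi_norm_le_iff_of_nonneg zero_le_one).2 fun j => ?_
  have hj : projUnitCube x j ∈ Set.Icc 0 1 := (projIcc 0 1 zero_le_one (x j)).2
  exact abs_le.2 ⟨by linarith [hj.1], hj.2⟩

theorem lipschitzWith_projUnitCube [Fintype ι] : LipschitzWith 1 (projUnitCube : (ι → ℝ) → ι → ℝ) :=
  LipschitzWith.of_dist_le_mul fun x y => (dist_pi_le_iff (by positivity)).2 fun j =>
    ((LipschitzWith.projIcc zero_le_one).dist_le_mul (x j) (y j)).trans
      (by gcongr; exact dist_le_pi_dist x y j)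

end UnitCube

section TruncatedField

variable {ι : Type*} [Fintype ι] {q : (ι → ℝ) → ι → ι → ℝ} {B : ℝ≥0}

theorem lipschitzWith_kineticField_comp_projUnitCube {c : ℝ≥0} (hB : ∀ x j i, |q x j i| ≤ B)
    (hq : ∀ j i, LipschitzWith c fun x => q x j i) :
    LipschitzWith (Fintype.card ι * (B + c)) (kineticField q ∘ projUnitCube) := by
  simpa using lipschitzOnWith_univ.1 <| (lipschitzOnWith_kineticField (R := 1) hB hq).comp
    (lipschitzWith_projUnitCube.lipschitzOnWith (s := univ))
    fun x _ => projUnitCube_mem_closedBall x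

theorem norm_kineticField_projUnitCube_le (hB : ∀ x j i, |q x j i| ≤ B) (x : ι → ℝ) :
    ‖kineticField q (projUnitCube x)‖ ≤ ↑(Fintype.card ι * B) := by
  simpa using norm_kineticField_le (R := 1) hB
    (mem_closedBall_zero_iff.1 (projUnitCube_mem_closedBall x))

theorem kineticField_projUnitCube_nonneg {x : ι → ℝ} {i : ι} (hxi : x i < 0)
    (hoff : ∀ j, j ≠ i → 0 ≤ q (projUnitCube x) j i) : 0 ≤ kineticField q (projUnitCube x) i :=
  kineticField_nonneg (projUnitCube_nonneg x) (projUnitCube_apply_of_nonpos hxi.le) hoff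

end TruncatedField

theorem stmt9_general (d : ℕ) (T Q : ℝ) (hT : 0 < T) (hQ : 0 < Q) (c : NNReal)
    (q : ℝ → (Fin d → ℝ) → Fin d → Fin d → ℝ)
    (hbox : ∀ (t : ℝ) (x : Fin d → ℝ) (i j : Fin d), i ≠ j → q t x i j ∈ Set.Icc 0 Q)
    (hrow : ∀ (t : ℝ) (x : Fin d → ℝ) (i : Fin d), ∑ j, q t x i j = 0)
    (hLip : ∀ (t : ℝ) (i j : Fin d), LipschitzWith c (fun x => q t x i j))
    (hcont : ∀ i j : Fin d, Continuous (fun p : ℝ × (Fin d → ℝ) => q p.1 p.2 i j))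
    (x₀ : Fin d → ℝ) (hx₀ : x₀ ∈ stdSimplex ℝ (Fin d)) :
    ∃ X : ℝ → Fin d → ℝ,
      X 0 = x₀ ∧
      (∀ t ∈ Set.Icc 0 T,
        HasDerivWithinAt X (fun i => ∑ j, X t j * q t (X t) j i) (Set.Icc 0 T) t) ∧
      (∀ t ∈ Set.Icc 0 T, X t ∈ stdSimplex ℝ (Fin d)) ∧
      ∀ Y : ℝ → Fin d → ℝ, Y 0 = x₀ →
        (∀ t ∈ Set.Icc 0 T,
          HasDerivWithinAt Y (fun i => ∑ j, Y t j * q t (Y t) j i) (Set.Icc 0 T) t) →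
        ∀ t ∈ Set.Icc 0 T, Y t = X t := by
  let B : ℝ≥0 := ⟨Fintype.card (Fin d) * Q, by positivity⟩
  have hB (t : ℝ) : ∀ x j i, |q t x j i| ≤ B := fun x j i =>
    abs_le_card_mul_of_sum_eq_zero hQ.le (hbox t x j) (hrow t x j) i
  have hqt (x : Fin d → ℝ) (j i : Fin d) : Continuous fun t => q t x j i :=
    (hcont j i).comp (continuous_id.prodMk continuous_const)
  obtain ⟨X, hX0, hXV⟩ := exists_forall_mem_Icc_hasDerivWithinAt_of_lipschitzWith
    (v := fun t => kineticField (q t) ∘ projUnitCube) hT.le x₀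
    (fun t _ => lipschitzWith_kineticField_comp_projUnitCube (hB t) (hLip t))
    (fun x => (continuous_kineticField_apply (hqt (projUnitCube x))).continuousOn)
    (fun t _ => norm_kineticField_projUnitCube_le (hB t))
  have hXmem : ∀ t ∈ Icc 0 T, X t ∈ stdSimplex ℝ (Fin d) :=
    mem_stdSimplex_of_hasDerivWithinAt hXV (fun t _ => sum_kineticField (hrow t _))
      (fun t _ i hi => kineticField_projUnitCube_nonneg hi fun j hji => (hbox t _ j i hji).1)
      (by rw [hX0]; exact hx₀)
  have hX : ∀ t ∈ Icc 0 T, HasDerivWithinAt X (kineticField (q t) (X t)) (Icc 0 T) t :=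
    fun t ht => by
      simpa only [Function.comp_apply, projUnitCube_of_mem_stdSimplex (hXmem t ht)]
        using hXV t ht
  refine ⟨X, hX0, hX, hXmem, fun Y hY0 hY => ?_⟩
  exact eqOn_Icc_of_hasDerivWithinAt_of_lipschitzOnWith_closedBall
    (v := fun t => kineticField (q t))
    (fun R => ⟨_, fun t _ => lipschitzOnWith_kineticField (hB t) (hLip t)⟩) hY hX
    (hY0.trans hX0.symm)

theorem stmt9 (d : ℕ) (hd : 0 < d) (T Q : ℝ) (hT : 0 < T) (hQ : 0 < Q) (c : NNReal)
    (q : ℝ → (Fin d → ℝ) → Fin d → Fin d → ℝ)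
    (hbox : ∀ (t : ℝ) (x : Fin d → ℝ) (i j : Fin d), i ≠ j → q t x i j ∈ Set.Icc 0 Q)
    (hrow : ∀ (t : ℝ) (x : Fin d → ℝ) (i : Fin d), ∑ j, q t x i j = 0)
    (hLip : ∀ (t : ℝ) (i j : Fin d), LipschitzWith c (fun x => q t x i j))
    (hcont : ∀ i j : Fin d, Continuous (fun p : ℝ × (Fin d → ℝ) => q p.1 p.2 i j))
    (x₀ : Fin d → ℝ) (hx₀ : x₀ ∈ stdSimplex ℝ (Fin d)) :
    ∃ X : ℝ → Fin d → ℝ,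
      X 0 = x₀ ∧
      (∀ t ∈ Set.Icc 0 T,
        HasDerivWithinAt X (fun i => ∑ j, X t j * q t (X t) j i) (Set.Icc 0 T) t) ∧
      (∀ t ∈ Set.Icc 0 T, X t ∈ stdSimplex ℝ (Fin d)) ∧
      ∀ Y : ℝ → Fin d → ℝ, Y 0 = x₀ →
        (∀ t ∈ Set.Icc 0 T,
          HasDerivWithinAt Y (fun i => ∑ j, Y t j * q t (Y t) j i) (Set.Icc 0 T) t) →
        ∀ t ∈ Set.Icc 0 T, Y t = X t :=
  stmt9_general d T Q hT hQ c q hbox hrow hLip hcont x₀ hx₀
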